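/- For every p ∈ [1,∞) and every t ∈ (0,T] it holds that ‖Y^X_t − Y^O_t‖_{L^p(P;V)} ≤ ( ∫_0^t ‖E_{t−s} − S_{⌊s⌋,t}‖_{L(H,V)} ds ) · ( sup_{s∈[0,T)} ‖F(Y_s)‖_{L^p(P;H)} ) + ( T^{1+α−σ} / ((1−σ) M^α) ) · ( sup_{s∈(0,T)} s^σ ‖E_s‖_{L(H,V)} ) · ( sup_{s∈[0,T)} ‖𝕍(Y_s)‖_{L^{2pα}(P;ℝ)}^α · ‖F(Y_s)‖_{L^{2p}(P;H)} ), where all L^r-norms, suprema and integrals take values in [0,∞] and the inequality is understood in [0,∞]. (Lemma 4.1 of the paper, stated for an arbitrary measurable operator family E in place of the analytic semigroup (e^{sA})_{s∈(0,T]}.) -/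

import Mathlib

/-!
Write `r = ⌊s⌋` and `A = {𝕍(Y_r) ≤ M/T}`. The integrand splits as
`E_{t-s} F(Y_r) - S_{r,t} 1_A F(Y_r) = (E_{t-s} - S_{r,t}) 1_A F(Y_r) + E_{t-s} 1_{Aᶜ} F(Y_r)`.
Minkowski's integral inequality moves the `L^p(P)`-norm inside the `ds`-integral. The first
term is bounded by `‖E_{t-s} - S_{r,t}‖ ‖F(Y_r)‖_{L^p}`. On `Aᶜ` one has
`1 ≤ (T 𝕍(Y_r) / M)^α`, so by Hölder with exponents `(2p, 2p)` the second term is at most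
`‖E_{t-s}‖ (T/M)^α ‖𝕍(Y_r)‖_{L^{2pα}}^α ‖F(Y_r)‖_{L^{2p}}`, while
`‖E_{t-s}‖ ≤ (t-s)^{-σ} sup_u u^σ ‖E_u‖` and `∫_0^t (t-s)^{-σ} ds = t^{1-σ}/(1-σ)`.
-/

open MeasureTheory Set

/-- `⌊t⌋_h = max({0, h, −h, 2h, −2h, …} ∩ (−∞, t])` for `h > 0`. -/
noncomputable def hfloor (h t : ℝ) : ℝ := h * (⌊t / h⌋ : ℝ)

open Function ENNReal

namespace ENNReal

lemma iSup_rpow_min_natCast (a : ℝ≥0∞) {p : ℝ} (hp : 0 < p) :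
    ⨆ n : ℕ, min a n ^ p = a ^ p := by
  have h := (orderIsoRpow p hp).map_iSup fun n : ℕ => min a n
  simp only [orderIsoRpow_apply] at h
  rw [← h, ← inf_iSup_eq, iSup_natCast, inf_top_eq]

lemma le_rpow_of_le_mul_rpow {p q : ℝ} (hpq : p.HolderConjugate q) {B R : ℝ≥0∞} (hB : B ≠ ∞)
    (h : B ≤ R * B ^ (1 / q)) : B ≤ R ^ p := by
  rcases eq_or_ne B 0 with rfl | hB0
  · exact bot_le
  have hsplit : B ^ (1 / p) * B ^ (1 / q) = B := by
    rw [← rpow_add _ _ hB0 hB, one_div, one_div, hpq.inv_add_inv_eq_one, rpow_one]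
  have hBp : B ^ (1 / p) ≤ R := by
    refine (ENNReal.mul_le_mul_iff_left ?_ ?_).1 (hsplit.trans_le h)
    · exact (rpow_pos (pos_iff_ne_zero.2 hB0) hB).ne'
    · exact rpow_ne_top_of_nonneg (one_div_nonneg.2 hpq.symm.nonneg) hB
  calc B = (B ^ (1 / p)) ^ p := by rw [← rpow_mul, one_div_mul_cancel hpq.ne_zero, rpow_one]
    _ ≤ R ^ p := rpow_le_rpow hBp hpq.nonneg

lemma ofReal_le_rpow_neg_mul_biSup {I : Set ℝ} {u : ℝ} (hu : u ∈ I) (hu0 : 0 < u)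
    (σ : ℝ) (φ : ℝ → ℝ) :
    ENNReal.ofReal (φ u) ≤ ENNReal.ofReal (u ^ (-σ)) * ⨆ s ∈ I, ENNReal.ofReal (s ^ σ * φ s) := by
  calc ENNReal.ofReal (φ u) = ENNReal.ofReal (u ^ (-σ)) * ENNReal.ofReal (u ^ σ * φ u) := by
        rw [← ENNReal.ofReal_mul (by positivity), ← mul_assoc, ← Real.rpow_add hu0, neg_add_cancel,
          Real.rpow_zero, one_mul]
    _ ≤ _ := by gcongr; exact le_iSup₂_of_le u hu le_rfl

end ENNReal

section Minkowski

variable {X Ω : Type*} [MeasurableSpace X] [MeasurableSpace Ω] {ν : Measure X} {μ : Measure Ω}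

lemma lintegral_rpow_le_mul_rpow_of_le_lintegral [SFinite ν] [SFinite μ] {p q : ℝ}
    (hpq : p.HolderConjugate q) {F : X → Ω → ℝ≥0∞} (hF : Measurable (uncurry F))
    {J : Ω → ℝ≥0∞} (hJ : Measurable J) (hJF : ∀ ω, J ω ≤ ∫⁻ s, F s ω ∂ν) :
    ∫⁻ ω, J ω ^ p ∂μ ≤
      (∫⁻ s, (∫⁻ ω, F s ω ^ p ∂μ) ^ (1 / p) ∂ν) * (∫⁻ ω, J ω ^ p ∂μ) ^ (1 / q) := by
  have hFp : Measurable fun s => (∫⁻ ω, F s ω ^ p ∂μ) ^ (1 / p) :=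
    (hF.pow_const p).lintegral_prod_right'.pow_const _
  calc ∫⁻ ω, J ω ^ p ∂μ ≤ ∫⁻ ω, J ω ^ (p - 1) * ∫⁻ s, F s ω ∂ν ∂μ := by
        refine lintegral_mono fun ω => ?_
        calc J ω ^ p = J ω ^ (p - 1) * J ω ^ (1 : ℝ) := by
              rw [← rpow_add_of_nonneg _ _ hpq.sub_one_pos.le zero_le_one, sub_add_cancel]
          _ ≤ J ω ^ (p - 1) * ∫⁻ s, F s ω ∂ν := by rw [rpow_one]; gcongr; exact hJF ω
    _ = ∫⁻ ω, ∫⁻ s, F s ω * J ω ^ (p - 1) ∂ν ∂μ := lintegral_congr fun ω => by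
        rw [lintegral_mul_const _ hF.of_uncurry_right, mul_comm]
    _ = ∫⁻ s, ∫⁻ ω, F s ω * J ω ^ (p - 1) ∂μ ∂ν := lintegral_lintegral_swap
        ((hF.comp measurable_swap).mul ((hJ.pow_const _).comp measurable_fst)).aemeasurable
    _ ≤ ∫⁻ s, (∫⁻ ω, F s ω ^ p ∂μ) ^ (1 / p) * (∫⁻ ω, J ω ^ p ∂μ) ^ (1 / q) ∂ν := by
        refine lintegral_mono fun s => ?_
        refine (lintegral_mul_le_Lp_mul_Lq μ hpq hF.of_uncurry_left.aemeasurable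
          (hJ.pow_const _).aemeasurable).trans_eq ?_
        simp_rw [← rpow_mul, hpq.sub_one_mul_conj]
    _ = _ := lintegral_mul_const _ hFp

/-- **Minkowski's integral inequality**. -/
theorem lintegral_Lp_lintegral_le [SFinite ν] [IsFiniteMeasure μ] {p : ℝ} (hp : 1 ≤ p)
    {F : X → Ω → ℝ≥0∞} (hF : Measurable (uncurry F)) :
    (∫⁻ ω, (∫⁻ s, F s ω ∂ν) ^ p ∂μ) ^ (1 / p) ≤ ∫⁻ s, (∫⁻ ω, F s ω ^ p ∂μ) ^ (1 / p) ∂ν := by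
  have hFswap : Measurable (uncurry fun ω s => F s ω) := hF.comp measurable_swap
  obtain rfl | hp1 := hp.eq_or_lt
  · simpa using (lintegral_lintegral_swap hFswap.aemeasurable).le
  have hp0 : 0 < p := zero_lt_one.trans hp1
  have hpq := Real.HolderConjugate.conjExponent hp1
  set R := ∫⁻ s, (∫⁻ ω, F s ω ^ p ∂μ) ^ (1 / p) ∂ν
  set I := fun ω => ∫⁻ s, F s ω ∂ν
  have hI : Measurable I := hFswap.lintegral_prod_right'
  -- truncating `I` makes `∫⁻ I ^ p` finite, so that the Hölder bound can be divided through
  have htrunc (n : ℕ) : ∫⁻ ω, min (I ω) n ^ p ∂μ ≤ R ^ p := by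
    refine le_rpow_of_le_mul_rpow hpq ?_ (lintegral_rpow_le_mul_rpow_of_le_lintegral hpq hF
      (hI.min measurable_const) fun ω => min_le_left _ _)
    refine ne_top_of_le_ne_top ?_
      (lintegral_mono fun ω => rpow_le_rpow (min_le_right (I ω) n) hp0.le)
    rw [lintegral_const]
    exact mul_ne_top (rpow_ne_top_of_nonneg hp0.le (natCast_ne_top n)) (measure_ne_top _ _)
  have hIp : ∫⁻ ω, I ω ^ p ∂μ ≤ R ^ p := by
    calc ∫⁻ ω, I ω ^ p ∂μ = ∫⁻ ω, ⨆ n : ℕ, min (I ω) n ^ p ∂μ := by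
          simp only [iSup_rpow_min_natCast _ hp0]
      _ ≤ R ^ p := ?_
    rw [lintegral_iSup (fun n => (hI.min measurable_const).pow_const p)
      fun m n hmn ω => rpow_le_rpow (min_le_min_left _ (Nat.cast_le.2 hmn)) hp0.le]
    exact iSup_le htrunc
  calc (∫⁻ ω, I ω ^ p ∂μ) ^ (1 / p) ≤ (R ^ p) ^ (1 / p) := by gcongr
    _ = R := by rw [← rpow_mul, mul_one_div_cancel hp0.ne', rpow_one]

theorem eLpNorm_integral_le_lintegral_eLpNorm [SFinite ν] [IsFiniteMeasure μ]
    {E : Type*} [NormedAddCommGroup E] [NormedSpace ℝ E] [MeasurableSpace E]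
    [OpensMeasurableSpace E] {p : ℝ≥0∞} (hp : 1 ≤ p) (hp_top : p ≠ ∞) {g : X → Ω → E}
    (hg : Measurable (uncurry g)) :
    eLpNorm (fun ω => ∫ s, g s ω ∂ν) p μ ≤ ∫⁻ s, eLpNorm (g s) p μ ∂ν := by
  have hp0 : p ≠ 0 := (zero_lt_one.trans_le hp).ne'
  simp only [eLpNorm_eq_lintegral_rpow_enorm_toReal hp0 hp_top]
  calc (∫⁻ ω, ‖∫ s, g s ω ∂ν‖ₑ ^ p.toReal ∂μ) ^ (1 / p.toReal)
      ≤ (∫⁻ ω, (∫⁻ s, ‖g s ω‖ₑ ∂ν) ^ p.toReal ∂μ) ^ (1 / p.toReal) := by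
        gcongr with ω
        exact enorm_integral_le_lintegral_enorm _
    _ ≤ _ := lintegral_Lp_lintegral_le (by simpa using toReal_mono hp_top hp) hg.enorm

theorem eLpNorm_setIntegral_Ioc_le [IsFiniteMeasure μ] {E : Type*} [NormedAddCommGroup E]
    [NormedSpace ℝ E] [MeasurableSpace E] [OpensMeasurableSpace E] {g : ℝ → Ω → E}
    (hg : Measurable (uncurry g)) {p : ℝ≥0∞} (hp : 1 ≤ p) (hp_top : p ≠ ∞) {a b : ℝ}
    {B : ℝ → ℝ≥0∞} (hB : ∀ s ∈ Ioo a b, eLpNorm (g s) p μ ≤ B s) :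
    eLpNorm (fun ω => ∫ s in Ioc a b, g s ω) p μ ≤ ∫⁻ s in Ioc a b, B s := by
  rw [← setLIntegral_congr Ioo_ae_eq_Ioc]
  refine (eLpNorm_integral_le_lintegral_eLpNorm hp hp_top hg).trans ?_
  rw [← setLIntegral_congr Ioo_ae_eq_Ioc]
  exact setLIntegral_mono' measurableSet_Ioo hB

end Minkowski

namespace ContinuousLinearMap

variable {H V : Type*} [NormedAddCommGroup H] [NormedSpace ℝ H] [NormedAddCommGroup V]
  [NormedSpace ℝ V]

lemma norm_eq_iSup_of_denseRange {d : ℕ → H} (hd : DenseRange d) (B : H →L[ℝ] V) :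
    ‖B‖ = ⨆ n, ‖B (d n)‖ / ‖d n‖ := by
  have hle (n : ℕ) : ‖B (d n)‖ / ‖d n‖ ≤ ‖B‖ := by
    rcases eq_or_ne (d n) 0 with h0 | h0
    · simp [h0]
    · exact div_le_of_le_mul₀ (norm_nonneg _) (norm_nonneg _) (B.le_opNorm _)
  have hbdd : BddAbove (range fun n => ‖B (d n)‖ / ‖d n‖) := ⟨‖B‖, forall_mem_range.2 hle⟩
  refine le_antisymm (B.opNorm_le_bound (le_ciSup_of_le hbdd 0 (by positivity)) fun x => ?_)
    (ciSup_le hle)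
  refine hd.induction_on x (isClosed_le (by fun_prop) (by fun_prop)) fun n => ?_
  rcases eq_or_ne (d n) 0 with h0 | h0
  · simp [h0]
  · rw [← div_le_iff₀ (norm_pos_iff.2 h0)]
    exact le_ciSup hbdd n

lemma measurable_norm_of_measurable_apply [TopologicalSpace.SeparableSpace H]
    [MeasurableSpace V] [OpensMeasurableSpace V] {X : Type*} [MeasurableSpace X]
    {A : X → H →L[ℝ] V} (hA : ∀ x, Measurable fun s => A s x) :
    Measurable fun s => ‖A s‖ := by
  have : Nonempty H := ⟨0⟩
  simp only [norm_eq_iSup_of_denseRange (TopologicalSpace.denseRange_denseSeq H)]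
  exact .iSup fun n => (hA _).norm.div_const _

end ContinuousLinearMap

section Truncation

variable {Ω E : Type*} [MeasurableSpace Ω] {μ : Measure Ω} [NormedAddCommGroup E]
  [NormedSpace ℝ E]

lemma norm_ite_le_rpow_neg_mul {κ α : ℝ} (hκ : 0 < κ) (hα : 0 ≤ α) (v : ℝ) (x : E) :
    ‖if v ≤ κ then 0 else x‖ ≤ κ ^ (-α) * ‖(‖v‖ ^ α) • x‖ := by
  split_ifs with h
  · rw [norm_zero]; positivity
  · have hκv : 1 ≤ ‖v‖ / κ := (one_le_div hκ).2 ((not_le.1 h).le.trans (Real.le_norm_self v))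
    rw [norm_smul, Real.norm_of_nonneg (by positivity), ← mul_assoc, Real.rpow_neg hκ.le,
      ← div_eq_inv_mul, ← Real.div_rpow (norm_nonneg v) hκ.le]
    exact le_mul_of_one_le_left (norm_nonneg x) (Real.one_le_rpow hκv hα)

theorem eLpNorm_ite_zero_le {κ α : ℝ} (hκ : 0 < κ) (hα : 0 < α) {v : Ω → ℝ} {f : Ω → E}
    (hv : AEStronglyMeasurable v μ) (hf : AEStronglyMeasurable f μ) (q : ℝ≥0∞) :
    eLpNorm (fun ω => if v ω ≤ κ then 0 else f ω) q μ ≤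
      ENNReal.ofReal (κ ^ (-α)) *
        (eLpNorm v (2 * q * ENNReal.ofReal α) μ ^ α * eLpNorm f (2 * q) μ) := by
  have : HolderTriple (2 * q) (2 * q) q := ⟨by
    rw [ENNReal.mul_inv (.inl two_ne_zero) (.inl ofNat_ne_top), ← add_mul, inv_two_add_inv_two,
      one_mul]⟩
  calc eLpNorm (fun ω => if v ω ≤ κ then 0 else f ω) q μ
      ≤ ENNReal.ofReal (κ ^ (-α)) * eLpNorm ((fun ω => ‖v ω‖ ^ α) • f) q μ :=
        eLpNorm_le_mul_eLpNorm_of_ae_le_mul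
          (.of_forall fun ω => norm_ite_le_rpow_neg_mul hκ hα.le (v ω) (f ω)) q
    _ ≤ ENNReal.ofReal (κ ^ (-α)) *
        (eLpNorm (fun ω => ‖v ω‖ ^ α) (2 * q) μ * eLpNorm f (2 * q) μ) := by
        gcongr
        exact eLpNorm_smul_le_mul_eLpNorm hf (hv.aemeasurable.norm.pow_const α).aestronglyMeasurable
    _ = _ := by rw [eLpNorm_norm_rpow _ hα]

theorem eLpNorm_apply_sub_apply_ite_le {F : Type*} [NormedAddCommGroup F] [NormedSpace ℝ F]
    (A B : E →L[ℝ] F) {κ α : ℝ} (hκ : 0 < κ) (hα : 0 < α) {v : Ω → ℝ} {f : Ω → E}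
    (hv : Measurable v) (hf : AEStronglyMeasurable f μ) {q : ℝ≥0∞} (hq : 1 ≤ q) :
    eLpNorm (fun ω => A (f ω) - B (if v ω ≤ κ then f ω else 0)) q μ ≤
      ENNReal.ofReal ‖A - B‖ * eLpNorm f q μ +
        ENNReal.ofReal ‖A‖ * (ENNReal.ofReal (κ ^ (-α)) *
          (eLpNorm v (2 * q * ENNReal.ofReal α) μ ^ α * eLpNorm f (2 * q) μ)) := by
  have hset : MeasurableSet {ω | v ω ≤ κ} := measurableSet_le hv measurable_const
  have hhead : AEStronglyMeasurable (fun ω => if v ω ≤ κ then f ω else 0) μ :=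
    (hf.indicator hset).congr (.of_forall fun ω => by simp [indicator_apply])
  have htail : AEStronglyMeasurable (fun ω => if v ω ≤ κ then 0 else f ω) μ :=
    (hf.indicator hset.compl).congr
      (.of_forall fun ω => by simp [indicator_apply, -not_le, ite_not])
  have hsplit : (fun ω => A (f ω) - B (if v ω ≤ κ then f ω else 0)) =
      fun ω => (A - B) (if v ω ≤ κ then f ω else 0) + A (if v ω ≤ κ then 0 else f ω) := by
    ext ω; split_ifs <;> simp
  rw [hsplit]
  refine (eLpNorm_add_le ((A - B).continuous.comp_aestronglyMeasurable hhead)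
    (A.continuous.comp_aestronglyMeasurable htail) hq).trans (add_le_add ?_ ?_)
  · refine eLpNorm_le_mul_eLpNorm_of_ae_le_mul (.of_forall fun ω => ?_) q
    refine ((A - B).le_opNorm _).trans (mul_le_mul_of_nonneg_left ?_ (norm_nonneg _))
    split_ifs <;> simp
  · refine (eLpNorm_le_mul_eLpNorm_of_ae_le_mul (.of_forall fun ω => A.le_opNorm _) q).trans ?_
    gcongr
    exact eLpNorm_ite_zero_le hκ hα hv.aestronglyMeasurable hf q

end Truncation

section Discretization

lemma measurable_hfloor (h : ℝ) : Measurable (hfloor h) :=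
  measurable_const.mul
    (measurable_from_top.comp (Int.measurable_floor.comp (measurable_id.div_const h)))

lemma hfloor_nonneg {h t : ℝ} (hh : 0 ≤ h) (ht : 0 ≤ t) : 0 ≤ hfloor h t :=
  mul_nonneg hh (Int.cast_nonneg (Int.floor_nonneg.2 (div_nonneg ht hh)))

lemma hfloor_le {h : ℝ} (hh : 0 < h) (t : ℝ) : hfloor h t ≤ t := by
  calc h * (⌊t / h⌋ : ℝ) ≤ h * (t / h) := mul_le_mul_of_nonneg_left (Int.floor_le _) hh.le
    _ = t := mul_div_cancel₀ t hh.ne'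

-- `hfloor h` takes values in the countable grid `h ℤ`, so separate measurability in `ω` suffices.
lemma measurable_uncurry_hfloor {Ω β : Type*} [MeasurableSpace Ω] [MeasurableSpace β]
    {Y : ℝ → Ω → β} (hY : ∀ s, Measurable (Y s)) (h : ℝ) :
    Measurable fun z : ℝ × Ω => Y (hfloor h z.1) z.2 := by
  have hgrid : Measurable fun z : Ω × ℤ => Y (h * z.2) z.1 :=
    measurable_from_prod_countable_left fun k => hY (h * k)
  exact hgrid.comp (measurable_snd.prodMk (Int.measurable_floor.comp (measurable_fst.div_const h)))

end Discretization

lemma lintegral_Ioc_ofReal_sub_rpow_neg {σ t : ℝ} (hσ : σ < 1) (ht : 0 ≤ t) :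
    ∫⁻ s in Ioc 0 t, ENNReal.ofReal ((t - s) ^ (-σ)) = ENNReal.ofReal (t ^ (1 - σ) / (1 - σ)) := by
  have hint : IntervalIntegrable (fun s => (t - s) ^ (-σ)) volume 0 t := by
    have h := ((intervalIntegral.intervalIntegrable_rpow' (a := 0) (b := t) (r := -σ)
      (by linarith)).comp_sub_left t)
    rw [sub_zero, sub_self] at h
    exact h.symm
  rw [← ofReal_integral_eq_lintegral_ofReal
    ((intervalIntegrable_iff_integrableOn_Ioc_of_le ht).1 hint)
    ((ae_restrict_mem measurableSet_Ioc).mono fun s hs => Real.rpow_nonneg (by linarith [hs.2]) _),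
    ← intervalIntegral.integral_of_le ht,
    intervalIntegral.integral_comp_sub_left (fun u => u ^ (-σ)), sub_self, sub_zero,
    integral_rpow (.inl (by linarith)), Real.zero_rpow (by linarith), sub_zero, neg_add_eq_sub]

lemma lintegral_Ioc_ofReal_sub_rpow_neg_mul_le {σ α t T M : ℝ} (hσ : σ < 1) (ht : 0 < t)
    (htT : t ≤ T) (hM : 0 < M) :
    (∫⁻ s in Ioc 0 t, ENNReal.ofReal ((t - s) ^ (-σ))) * ENNReal.ofReal ((M / T) ^ (-α)) ≤
      ENNReal.ofReal (T ^ (1 + α - σ) / ((1 - σ) * M ^ α)) := by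
  have hT : 0 < T := ht.trans_le htT
  have hσ1 : 0 < 1 - σ := sub_pos.2 hσ
  rw [lintegral_Ioc_ofReal_sub_rpow_neg hσ ht.le, ← ofReal_mul (by positivity)]
  refine ofReal_le_ofReal ?_
  calc t ^ (1 - σ) / (1 - σ) * (M / T) ^ (-α) ≤ T ^ (1 - σ) / (1 - σ) * (M / T) ^ (-α) := by
        gcongr
    _ = _ := by
        rw [Real.rpow_neg (by positivity), Real.div_rpow hM.le hT.le,
          show 1 + α - σ = 1 - σ + α by ring, Real.rpow_add hT]
        field_simp

section MildIntegrand

variable {Ω H V : Type*} [MeasurableSpace Ω] [NormedAddCommGroup H] [NormedSpace ℝ H]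
  [NormedAddCommGroup V] [NormedSpace ℝ V] {F : V → H} {Vm : V → ℝ} {E : ℝ → H →L[ℝ] V}
  {S : ℝ → ℝ → H →L[ℝ] V} {Y : ℝ → Ω → V}

theorem eLpNorm_apply_sub_apply_ite_le_biSup {P : Measure Ω} {I J : Set ℝ} {κ σ α p : ℝ}
    (hκ : 0 < κ) (hα : 0 < α) (hp : 1 ≤ p) (B : H →L[ℝ] V) {r u : ℝ} (hr : r ∈ I)
    (hu : u ∈ J) (hu0 : 0 < u) (hF : AEStronglyMeasurable (fun ω => F (Y r ω)) P)
    (hVm : Measurable fun ω => Vm (Y r ω)) :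
    eLpNorm (fun ω => E u (F (Y r ω)) - B (if Vm (Y r ω) ≤ κ then F (Y r ω) else 0))
        (ENNReal.ofReal p) P ≤
      ENNReal.ofReal ‖E u - B‖ * (⨆ s ∈ I, eLpNorm (fun ω => F (Y s ω)) (ENNReal.ofReal p) P) +
        ENNReal.ofReal (u ^ (-σ)) * (ENNReal.ofReal (κ ^ (-α)) *
          (⨆ s ∈ J, ENNReal.ofReal (s ^ σ * ‖E s‖)) *
          ⨆ s ∈ I, eLpNorm (fun ω => Vm (Y s ω)) (ENNReal.ofReal (2 * p * α)) P ^ α *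
            eLpNorm (fun ω => F (Y s ω)) (ENNReal.ofReal (2 * p)) P) := by
  have h2p : ENNReal.ofReal (2 * p) = 2 * ENNReal.ofReal p := by
    rw [ofReal_mul zero_le_two, ofReal_ofNat]
  have h2pα : ENNReal.ofReal (2 * p * α) = 2 * ENNReal.ofReal p * ENNReal.ofReal α := by
    rw [ofReal_mul (by linarith), h2p]
  refine (eLpNorm_apply_sub_apply_ite_le (E u) B hκ hα hVm hF (one_le_ofReal.2 hp)).trans ?_
  rw [h2p, h2pα]
  gcongr ?_ + ?_
  · gcongr
    exact le_iSup₂_of_le r hr le_rfl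
  · calc _ ≤ (ENNReal.ofReal (u ^ (-σ)) * ⨆ s ∈ J, ENNReal.ofReal (s ^ σ * ‖E s‖)) *
          (ENNReal.ofReal (κ ^ (-α)) * ⨆ s ∈ I,
            eLpNorm (fun ω => Vm (Y s ω)) (2 * ENNReal.ofReal p * ENNReal.ofReal α) P ^ α *
              eLpNorm (fun ω => F (Y s ω)) (2 * ENNReal.ofReal p) P) := by
          gcongr
          · exact ofReal_le_rpow_neg_mul_biSup hu hu0 σ fun s => ‖E s‖
          · exact le_iSup₂_of_le r hr le_rfl
      _ = _ := by ring

lemma measurable_norm_sub_apply_hfloor [TopologicalSpace.SeparableSpace H] [MeasurableSpace V]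
    [BorelSpace V] [SecondCountableTopology V] (hE : ∀ x, Measurable fun s => E s x)
    (hS : ∀ x, Measurable fun p : ℝ × ℝ => S p.1 p.2 x) (c t : ℝ) :
    Measurable fun s => ‖E (t - s) - S (hfloor c s) t‖ :=
  ContinuousLinearMap.measurable_norm_of_measurable_apply fun x =>
    ((hE x).comp (measurable_const.sub measurable_id)).sub
      ((hS x).comp ((measurable_hfloor c).prodMk measurable_const))

lemma measurable_uncurry_sub_apply_hfloor [MeasurableSpace H] [OpensMeasurableSpace H]
    [SecondCountableTopology H] [MeasurableSpace V] [BorelSpace V] [SecondCountableTopology V]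
    (hF : Measurable F) (hVm : Measurable Vm) (hE : ∀ x, Measurable fun s => E s x)
    (hS : ∀ x, Measurable fun p : ℝ × ℝ => S p.1 p.2 x) (hY : ∀ s, Measurable (Y s))
    (c κ t : ℝ) :
    Measurable (uncurry fun s ω => E (t - s) (F (Y (hfloor c s) ω)) -
      S (hfloor c s) t (if Vm (Y (hfloor c s) ω) ≤ κ then F (Y (hfloor c s) ω) else 0)) := by
  have happly {A : ℝ → H →L[ℝ] V} (hA : ∀ x, Measurable fun s => A s x) {x : ℝ × Ω → H}
      (hx : Measurable x) : Measurable fun z : ℝ × Ω => A z.1 (x z) :=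
    (measurable_uncurry_of_continuous_of_measurable (u := fun x s => A s x)
      (fun s => (A s).continuous) hA).comp (hx.prodMk measurable_fst)
  have hX := measurable_uncurry_hfloor hY c
  exact (happly (fun x => (hE x).comp (measurable_const.sub measurable_id)) (hF.comp hX)).sub
    (happly (fun x => (hS x).comp ((measurable_hfloor c).prodMk measurable_const))
      (Measurable.ite (measurableSet_le (hVm.comp hX) measurable_const) (hF.comp hX)
        measurable_const))

end MildIntegrand

theorem stmt5_general
    (T : ℝ) (hT : 0 < T) (M : ℕ) (hM : 0 < M)
    (σ α : ℝ) (hσ : σ ∈ Set.Ico (0 : ℝ) 1) (hα : 0 < α)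
    {H V : Type*}
    [NormedAddCommGroup H] [InnerProductSpace ℝ H]
    [TopologicalSpace.SeparableSpace H] [MeasurableSpace H] [BorelSpace H]
    [NormedAddCommGroup V] [NormedSpace ℝ V]
    [TopologicalSpace.SeparableSpace V] [MeasurableSpace V] [BorelSpace V]
    (F : V → H) (hFm : Measurable F)
    (Vm : V → ℝ) (hVmm : Measurable Vm)
    (E : ℝ → (H →L[ℝ] V)) (hEm : ∀ x : H, Measurable fun s : ℝ => E s x)
    (S : ℝ → ℝ → (H →L[ℝ] V)) (hSm : ∀ x : H, Measurable fun p : ℝ × ℝ => S p.1 p.2 x)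
    {Ω : Type*} [MeasurableSpace Ω] (P : Measure Ω) [IsProbabilityMeasure P]
    (Y : ℝ → Ω → V)
    (hYsm : ∀ s : ℝ, StronglyMeasurable fun ω => Y s ω)
    (hYXint : ∀ ω : Ω, ∀ t : ℝ, 0 < t → t ≤ T →
      IntegrableOn (fun s => E (t - s) (F (Y (hfloor (T / M) s) ω))) (Set.Ioc 0 t))
    (hYOint : ∀ ω : Ω, ∀ t : ℝ, 0 < t → t ≤ T →
      IntegrableOn
        (fun s => S (hfloor (T / M) s) t
          (if Vm (Y (hfloor (T / M) s) ω) ≤ (M : ℝ) / T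
            then F (Y (hfloor (T / M) s) ω) else 0))
        (Set.Ioc 0 t)) :
    ∀ p : ℝ, 1 ≤ p → ∀ t : ℝ, 0 < t → t ≤ T →
      eLpNorm
          (fun ω =>
            (∫ s in Set.Ioc (0 : ℝ) t, E (t - s) (F (Y (hfloor (T / M) s) ω))) -
              ∫ s in Set.Ioc (0 : ℝ) t, S (hfloor (T / M) s) t
                (if Vm (Y (hfloor (T / M) s) ω) ≤ (M : ℝ) / T
                  then F (Y (hfloor (T / M) s) ω) else 0))
          (ENNReal.ofReal p) P ≤
        (∫⁻ s in Set.Ioc (0 : ℝ) t,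
            ENNReal.ofReal ‖E (t - s) - S (hfloor (T / M) s) t‖) *
            (⨆ s ∈ Set.Ico (0 : ℝ) T,
              eLpNorm (fun ω => F (Y s ω)) (ENNReal.ofReal p) P) +
          ENNReal.ofReal (T ^ (1 + α - σ) / ((1 - σ) * (M : ℝ) ^ α)) *
            (⨆ s ∈ Set.Ioo (0 : ℝ) T, ENNReal.ofReal (s ^ σ * ‖E s‖)) *
            (⨆ s ∈ Set.Ico (0 : ℝ) T,
              (eLpNorm (fun ω => Vm (Y s ω)) (ENNReal.ofReal (2 * p * α)) P) ^ α *
                eLpNorm (fun ω => F (Y s ω)) (ENNReal.ofReal (2 * p)) P) := by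
  intro p hp t ht htT
  have : SecondCountableTopology H := UniformSpace.secondCountable_of_separable H
  have : SecondCountableTopology V := UniformSpace.secondCountable_of_separable V
  have hc : 0 < T / M := div_pos hT (Nat.cast_pos.2 hM)
  have hYm s : Measurable (Y s) := (hYsm s).measurable
  have hnorm := (measurable_norm_sub_apply_hfloor hEm hSm (T / M) t).ennreal_ofReal
  calc _ = eLpNorm (fun ω => ∫ s in Ioc 0 t, (E (t - s) (F (Y (hfloor (T / M) s) ω)) -
          S (hfloor (T / M) s) t (if Vm (Y (hfloor (T / M) s) ω) ≤ M / T
            then F (Y (hfloor (T / M) s) ω) else 0))) (ENNReal.ofReal p) P :=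
        eLpNorm_congr_ae <| .of_forall fun ω =>
          (integral_sub (hYXint ω t ht htT) (hYOint ω t ht htT)).symm
    _ ≤ ∫⁻ s in Ioc 0 t, (ENNReal.ofReal ‖E (t - s) - S (hfloor (T / M) s) t‖ * _ +
          ENNReal.ofReal ((t - s) ^ (-σ)) * (ENNReal.ofReal (((M : ℝ) / T) ^ (-α)) * _ * _)) :=
        eLpNorm_setIntegral_Ioc_le (measurable_uncurry_sub_apply_hfloor hFm hVmm hEm hSm hYm _ _ _)
          (one_le_ofReal.2 hp) ofReal_ne_top fun s hs =>
          eLpNorm_apply_sub_apply_ite_le_biSup (I := Ico 0 T) (J := Ioo 0 T)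
            (div_pos (Nat.cast_pos.2 hM) hT) hα hp _
            ⟨hfloor_nonneg hc.le hs.1.le, (hfloor_le hc s).trans_lt (hs.2.trans_le htT)⟩
            ⟨sub_pos.2 hs.2, by linarith [hs.1]⟩ (sub_pos.2 hs.2)
            (hFm.comp (hYm _)).aestronglyMeasurable (hVmm.comp (hYm _))
    _ = _ := by
        rw [lintegral_add_left (hnorm.mul_const _), lintegral_mul_const _ hnorm,
          lintegral_mul_const _ (by fun_prop)]
    _ ≤ _ := by
        rw [← mul_assoc, ← mul_assoc]
        gcongr
        exact lintegral_Ioc_ofReal_sub_rpow_neg_mul_le hσ.2 ht htT (Nat.cast_pos.2 hM)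

theorem stmt5
    (T : ℝ) (hT : 0 < T) (M : ℕ) (hM : 0 < M)
    (σ α : ℝ) (hσ : σ ∈ Set.Ico (0 : ℝ) 1) (hα : 0 < α)
    {H V : Type*}
    [NormedAddCommGroup H] [InnerProductSpace ℝ H] [CompleteSpace H]
    [TopologicalSpace.SeparableSpace H] [MeasurableSpace H] [BorelSpace H]
    [NormedAddCommGroup V] [NormedSpace ℝ V] [CompleteSpace V]
    [TopologicalSpace.SeparableSpace V] [MeasurableSpace V] [BorelSpace V]
    (F : V → H) (hFm : Measurable F)
    (Vm : V → ℝ) (hVm0 : ∀ v, 0 ≤ Vm v) (hVmm : Measurable Vm)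
    (E : ℝ → (H →L[ℝ] V)) (hEm : ∀ x : H, Measurable fun s : ℝ => E s x)
    (S : ℝ → ℝ → (H →L[ℝ] V)) (hSm : ∀ x : H, Measurable fun p : ℝ × ℝ => S p.1 p.2 x)
    {Ω : Type*} [MeasurableSpace Ω] (P : Measure Ω) [IsProbabilityMeasure P]
    (Y : ℝ → Ω → V)
    (hYsm : ∀ s : ℝ, StronglyMeasurable fun ω => Y s ω)
    (hYXint : ∀ ω : Ω, ∀ t : ℝ, 0 < t → t ≤ T →
      IntegrableOn (fun s => E (t - s) (F (Y (hfloor (T / M) s) ω))) (Set.Ioc 0 t))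
    (hYOint : ∀ ω : Ω, ∀ t : ℝ, 0 < t → t ≤ T →
      IntegrableOn
        (fun s => S (hfloor (T / M) s) t
          (if Vm (Y (hfloor (T / M) s) ω) ≤ (M : ℝ) / T
            then F (Y (hfloor (T / M) s) ω) else 0))
        (Set.Ioc 0 t))
    (hYXsm : ∀ t : ℝ, 0 < t → t ≤ T →
      StronglyMeasurable fun ω =>
        ∫ s in Set.Ioc (0 : ℝ) t, E (t - s) (F (Y (hfloor (T / M) s) ω)))
    (hYOsm : ∀ t : ℝ, 0 < t → t ≤ T →
      StronglyMeasurable fun ω =>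
        ∫ s in Set.Ioc (0 : ℝ) t, S (hfloor (T / M) s) t
          (if Vm (Y (hfloor (T / M) s) ω) ≤ (M : ℝ) / T
            then F (Y (hfloor (T / M) s) ω) else 0)) :
    ∀ p : ℝ, 1 ≤ p → ∀ t : ℝ, 0 < t → t ≤ T →
      eLpNorm
          (fun ω =>
            (∫ s in Set.Ioc (0 : ℝ) t, E (t - s) (F (Y (hfloor (T / M) s) ω))) -
              ∫ s in Set.Ioc (0 : ℝ) t, S (hfloor (T / M) s) t
                (if Vm (Y (hfloor (T / M) s) ω) ≤ (M : ℝ) / T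
                  then F (Y (hfloor (T / M) s) ω) else 0))
          (ENNReal.ofReal p) P ≤
        (∫⁻ s in Set.Ioc (0 : ℝ) t,
            ENNReal.ofReal ‖E (t - s) - S (hfloor (T / M) s) t‖) *
            (⨆ s ∈ Set.Ico (0 : ℝ) T,
              eLpNorm (fun ω => F (Y s ω)) (ENNReal.ofReal p) P) +
          ENNReal.ofReal (T ^ (1 + α - σ) / ((1 - σ) * (M : ℝ) ^ α)) *
            (⨆ s ∈ Set.Ioo (0 : ℝ) T, ENNReal.ofReal (s ^ σ * ‖E s‖)) *
            (⨆ s ∈ Set.Ico (0 : ℝ) T,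
              (eLpNorm (fun ω => Vm (Y s ω)) (ENNReal.ofReal (2 * p * α)) P) ^ α *
                eLpNorm (fun ω => F (Y s ω)) (ENNReal.ofReal (2 * p)) P) :=
  stmt5_general T hT M hM σ α hσ hα F hFm Vm hVmm E hEm S hSm P Y hYsm hYXint hYOint
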